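/- arXiv:2401.14508 — 3 statements merged into one kernel-verified Lean document; each statement's English description precedes it below -/
import Mathlib

section
/- For the relaxed Runge-Kutta update u^{n+1} = u^n + γΔt Σ_j b_j f_j, if ||Σ_j b_j f_j||² ≠ 0 and γ = (2 Σ_{i,j} b_i a_{ij} ⟨f_i, f_j⟩) / (Σ_{i,j} b_i b_j ⟨f_i, f_j⟩), then ||u^{n+1}||² − ||u^n||² = 2γΔt Σ_j b_j ⟨y_j, f_j⟩; in particular, if additionally ⟨y_j, f_j⟩ = 0 for all j, then ||u^{n+1}|| = ||u^n||. -/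
open RealInnerProductSpace

/-- Relaxation Runge-Kutta: with the relaxation parameter γ chosen as in
Eq. (11), the numerically induced energy change vanishes. -/
theorem rrk_energy_conservation {E : Type*} [NormedAddCommGroup E] [InnerProductSpace ℝ E]
    (s : ℕ) (A : Fin s → Fin s → ℝ) (b : Fin s → ℝ) (Δt γ : ℝ)
    (un : E) (f y : Fin s → E)
    (hy : ∀ i, y i = un + Δt • ∑ j, A i j • f j)
    (u1 : E) (hu1 : u1 = un + (γ * Δt) • ∑ j, b j • f j)
    (hne : ‖∑ j, b j • f j‖ ^ 2 ≠ 0)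
    (hγ : γ = (2 * ∑ i, ∑ j, b i * A i j * ⟪f i, f j⟫) /
              (∑ i, ∑ j, b i * b j * ⟪f i, f j⟫)) :
    ‖u1‖ ^ 2 - ‖un‖ ^ 2 = 2 * γ * Δt * ∑ j, b j * ⟪y j, f j⟫ ∧
      ((∀ j, ⟪y j, f j⟫ = 0) → ‖u1‖ = ‖un‖) := by
  set S : E := ∑ j, b j • f j with hSdef
  set N : ℝ := ∑ i, ∑ j, b i * A i j * ⟪f i, f j⟫ with hN
  set D : ℝ := ∑ i, ∑ j, b i * b j * ⟪f i, f j⟫ with hDdef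
  have hD : ‖S‖ ^ 2 = D := by
    rw [← real_inner_self_eq_norm_sq, hSdef, hDdef]
    rw [sum_inner]
    refine Finset.sum_congr rfl fun i _ => ?_
    rw [inner_sum]
    refine Finset.sum_congr rfl fun j _ => ?_
    rw [real_inner_smul_left, real_inner_smul_right]; ring
  have hDne : D ≠ 0 := hD ▸ hne
  have hγD : γ * D = 2 * N := by
    rw [hγ]; field_simp
  have hsum : ∑ j, b j * ⟪y j, f j⟫ = ⟪un, S⟫ + Δt * N := by
    have h1 : ∀ j, b j * ⟪y j, f j⟫
        = b j * ⟪un, f j⟫ + Δt * ∑ k, b j * A j k * ⟪f j, f k⟫ := by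
      intro j
      rw [hy j, inner_add_left, real_inner_smul_left, sum_inner, Finset.mul_sum]
      rw [mul_add]
      congr 1
      rw [Finset.mul_sum, Finset.mul_sum]
      refine Finset.sum_congr rfl fun k _ => ?_
      rw [real_inner_smul_left, real_inner_comm]; ring
    rw [Finset.sum_congr rfl fun j _ => h1 j, Finset.sum_add_distrib, ← Finset.mul_sum]
    congr 1
    rw [hSdef, inner_sum]
    exact (Finset.sum_congr rfl fun j _ => by rw [real_inner_smul_right]).symm
  have hmain : ‖u1‖ ^ 2 - ‖un‖ ^ 2 = 2 * γ * Δt * ∑ j, b j * ⟪y j, f j⟫ := by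
    rw [hu1, norm_add_sq_real, real_inner_smul_right, norm_smul, hsum]
    rw [mul_pow, hD, Real.norm_eq_abs, sq_abs]
    have h2 : γ ^ 2 * Δt ^ 2 * D = γ * Δt ^ 2 * (2 * N) := by
      rw [← hγD]; ring
    nlinarith [h2]
  refine ⟨hmain, fun h => ?_⟩
  have : ‖u1‖ ^ 2 = ‖un‖ ^ 2 := by
    have : ∑ j, b j * ⟪y j, f j⟫ = 0 := by simp [h]
    rw [this] at hmain; linarith
  rw [← Real.sqrt_sq (norm_nonneg u1), ← Real.sqrt_sq (norm_nonneg un), this]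
end

section
/- Under the conditions Σ_i k_i = 0, Σ_j b_j = 1, and Σ_i k_i c_i ≠ 0 (with c_i = Σ_j a_{ij}), if every stage derivative satisfies f_j = f_0 + O(Δt) as Δt → 0, then B*(Δt) = −2(Σ_i k_i c_i)||f_0||² + O(Δt); in particular, if f_0 ≠ 0, then B*(Δt) is bounded away from zero for sufficiently small Δt. -/
open RealInnerProductSpace Asymptotics Filter Topology

/-!
Write `B*` as a fixed linear form in the Gram matrix `⟪f_i, f_j⟫`. On the constant Gram matrix
`‖f₀‖²` the `b`-part vanishes because `Σ k_i = 0` and `Σ b_j = 1`, leaving `-2 (Σ k_i c_i) ‖f₀‖²`;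
by linearity the error is the same form applied to `⟪f_i, f_j⟫ - ‖f₀‖²`, whose entries are `O(Δt)`
by bilinearity of the inner product. The error tends to zero, so `B*` stays near its nonzero limit.
-/

section BoundedBilinear

variable {α 𝕜 E F G : Type*} [NontriviallyNormedField 𝕜]
  [SeminormedAddCommGroup E] [NormedSpace 𝕜 E] [SeminormedAddCommGroup F] [NormedSpace 𝕜 F]
  [SeminormedAddCommGroup G] [NormedSpace 𝕜 G]

theorem IsBoundedBilinearMap.isBigO_sub_of_isBigO_sub {B : E × F → G}
    (hB : IsBoundedBilinearMap 𝕜 B) {l : Filter α} {g : α → ℝ} {u : α → E} {v : α → F}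
    {x : E} {y : F} (hu : (fun t => u t - x) =O[l] g) (hv : (fun t => v t - y) =O[l] g)
    (hg : g =O[l] fun _ => (1 : ℝ)) :
    (fun t => B (u t, v t) - B (x, y)) =O[l] g := by
  have hv_bdd : v =O[l] fun _ => (1 : ℝ) := by
    simpa using (hv.trans hg).add (isBigO_const_const y one_ne_zero l)
  have hsplit : ∀ t, B (u t, v t) - B (x, y) = B (u t - x, v t) + B (x, v t - y) := fun t => by
    rw [hB.map_sub_left, hB.map_sub_right]
    abel
  have h₁ : (fun t => B (u t - x, v t)) =O[l] g := by
    simpa using hB.isBigO_comp.trans (hu.norm_left.mul hv_bdd.norm_left)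
  have h₂ : (fun t => B (x, v t - y)) =O[l] g := by
    simpa using hB.isBigO_comp.trans
      ((isBigO_const_const x one_ne_zero l).norm_left.mul hv.norm_left)
  simpa only [hsplit] using h₁.add h₂

end BoundedBilinear

theorem isBigO_inner_sub_inner {α E : Type*} [NormedAddCommGroup E] [InnerProductSpace ℝ E]
    {l : Filter α} {g : α → ℝ} {u v : α → E} {x y : E} (hu : (fun t => u t - x) =O[l] g)
    (hv : (fun t => v t - y) =O[l] g) (hg : g =O[l] fun _ => (1 : ℝ)) :
    (fun t => ⟪u t, v t⟫ - ⟪x, y⟫) =O[l] g :=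
  (isBoundedBilinearMap_inner (𝕜 := ℝ)).isBigO_sub_of_isBigO_sub hu hv hg

theorem exists_lt_forall_Ioo_le_norm_of_tendsto {α E : Type*} [LinearOrder α]
    [TopologicalSpace α] [OrderTopology α] [NoMaxOrder α] [NormedAddCommGroup E]
    {F : α → E} {a : α} {L : E} (hF : Tendsto F (𝓝[>] a) (𝓝 L)) (hL : L ≠ 0) :
    ∃ u > a, ∃ C > 0, ∀ t ∈ Set.Ioo a u, C ≤ ‖F t‖ := by
  have hL' : 0 < ‖L‖ := norm_pos_iff.2 hL
  have hnear : ∀ᶠ t in 𝓝[>] a, ‖L‖ / 2 < ‖F t‖ :=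
    hF.norm.eventually (lt_mem_nhds (half_lt_self hL'))
  obtain ⟨u, hu, hsub⟩ := mem_nhdsGT_iff_exists_Ioo_subset.1 hnear
  exact ⟨u, hu, ‖L‖ / 2, by positivity, fun t ht => (hsub ht).le⟩

namespace RungeKutta

open Finset

variable {ι : Type*} [Fintype ι] (A : ι → ι → ℝ) (b k : ι → ℝ)

/-- `B*` as a function of the Gram matrix `G i j = ⟪f_i, f_j⟫` of the stage derivatives. -/
def bstar (G : ι → ι → ℝ) : ℝ :=
  -2 * ∑ i, ∑ j, k i * A i j * G i j + 2 * ∑ i, ∑ j, k i * b j * G i j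

theorem bstar_sub (G H : ι → ι → ℝ) :
    bstar A b k G - bstar A b k H = bstar A b k (fun i j => G i j - H i j) := by
  simp only [bstar, mul_sub, sum_sub_distrib]
  ring

variable {b k}

theorem bstar_const (hk0 : ∑ i, k i = 0) (hb1 : ∑ j, b j = 1) (γ : ℝ) :
    bstar A b k (fun _ _ => γ) = -2 * (∑ i, k i * ∑ j, A i j) * γ := by
  have hb : ∑ i, ∑ j, k i * b j * γ = 0 := by
    simp only [← sum_mul, ← mul_sum, hb1, mul_one, hk0, zero_mul]
  rw [bstar, hb]
  simp only [← sum_mul, ← mul_sum]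
  ring

variable (b k)

theorem isBigO_bstar {α : Type*} {l : Filter α} {g : α → ℝ} {G : α → ι → ι → ℝ}
    (hG : ∀ i j, (fun t => G t i j) =O[l] g) :
    (fun t => bstar A b k (G t)) =O[l] g := by
  unfold bstar
  refine ((IsBigO.fun_sum fun i _ => IsBigO.fun_sum fun j _ => ?_).const_mul_left _).add
    ((IsBigO.fun_sum fun i _ => IsBigO.fun_sum fun j _ => ?_).const_mul_left _) <;>
  exact (hG i j).const_mul_left _

end RungeKutta

open RungeKutta in
/-- Taylor behaviour of B*: B*(Δt) = −2(Σ kᵢcᵢ)‖f₀‖² + O(Δt); hence B* is bounded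
away from zero for small Δt whenever f₀ ≠ 0. -/
theorem bstar_asymptotics {E : Type*} [NormedAddCommGroup E] [InnerProductSpace ℝ E]
    (s : ℕ) (A : Fin s → Fin s → ℝ) (b k c : Fin s → ℝ)
    (hc : ∀ i, c i = ∑ j, A i j)
    (hk0 : ∑ i, k i = 0) (hb1 : ∑ j, b j = 1) (hkc : ∑ i, k i * c i ≠ 0)
    (f : ℝ → Fin s → E) (f0 : E)
    (hf : ∀ j, (fun Δt => f Δt j - f0) =O[𝓝[>] (0 : ℝ)] fun Δt => Δt)
    (Bstar : ℝ → ℝ)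
    (hB : ∀ Δt, Bstar Δt =
        -2 * ∑ i, ∑ j, k i * A i j * ⟪f Δt i, f Δt j⟫
          + 2 * ∑ i, ∑ j, k i * b j * ⟪f Δt i, f Δt j⟫) :
    (fun Δt => Bstar Δt - (-2 * (∑ i, k i * c i) * ‖f0‖ ^ 2))
        =O[𝓝[>] (0 : ℝ)] (fun Δt => Δt) ∧
      (f0 ≠ 0 → ∃ δ > 0, ∃ C > 0, ∀ Δt ∈ Set.Ioo (0 : ℝ) δ, C ≤ |Bstar Δt|) := by
  have hΔt : Tendsto (fun Δt : ℝ => Δt) (𝓝[>] 0) (𝓝 0) :=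
    tendsto_nhdsWithin_of_tendsto_nhds tendsto_id
  have hlimit : -2 * (∑ i, k i * c i) * ‖f0‖ ^ 2 = bstar A b k fun _ _ => ⟪f0, f0⟫ := by
    simp only [bstar_const A hk0 hb1, hc, real_inner_self_eq_norm_sq]
  have herror : (fun Δt => Bstar Δt - (-2 * (∑ i, k i * c i) * ‖f0‖ ^ 2))
      =O[𝓝[>] (0 : ℝ)] (fun Δt => Δt) := by
    have hgram : ∀ Δt, Bstar Δt = bstar A b k fun i j => ⟪f Δt i, f Δt j⟫ := hB
    simp only [hgram, hlimit, bstar_sub]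
    exact isBigO_bstar A b k fun i j =>
      isBigO_inner_sub_inner (hf i) (hf j) (hΔt.isBigO_one ℝ)
  refine ⟨herror, fun hf0 => ?_⟩
  have hne : -2 * (∑ i, k i * c i) * ‖f0‖ ^ 2 ≠ 0 := by
    have := norm_ne_zero_iff.2 hf0
    positivity
  simpa only [Real.norm_eq_abs] using exists_lt_forall_Ioo_le_norm_of_tendsto
    (tendsto_sub_nhds_zero_iff.1 (herror.trans_tendsto hΔt)) hne
end

section
/- The semi-discrete Burgers scheme u_i' = −(F_{i+1/2} − F_{i−1/2})/Δx with symmetric flux F_{i+1/2} = (u_i² + u_i u_{i+1} + u_{i+1}²)/6 on a periodic grid conserves the discrete energy: Σ_i u_i u_i' = 0, i.e., (d/dt) Σ_i u_i² = 0. -/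
/-- The symmetric flux F(a,b) = (a² + ab + b²)/6 for the Burgers scheme. -/
noncomputable def burgersFlux (a b : ℝ) : ℝ := (a ^ 2 + a * b + b ^ 2) / 6

/-- The semi-discrete Burgers scheme with symmetric flux on a periodic grid
conserves the discrete energy: Σᵢ uᵢ uᵢ' = 0. -/
theorem burgers_energy_conservative (N : ℕ) [NeZero N] (Δx : ℝ) (hΔx : 0 < Δx)
    (u du : ZMod N → ℝ)
    (hdu : ∀ i, du i = -(burgersFlux (u i) (u (i + 1)) - burgersFlux (u (i - 1)) (u i)) / Δx) :
    ∑ i, u i * du i = 0 := by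
  set h : ZMod N → ℝ := fun i => u i * burgersFlux (u i) (u (i + 1)) - (u i) ^ 3 / 6 with hh
  have key : ∀ i, u i * du i = -(h i - h (i - 1)) / Δx := by
    intro i
    rw [hdu i]
    have : i - 1 + 1 = i := by ring
    simp only [hh, this, burgersFlux]
    field_simp
    ring
  have hsum : ∑ i, h i = ∑ i, h (i - 1) :=
    (Fintype.sum_equiv (Equiv.subRight (1 : ZMod N)) _ _ (fun i => rfl)).symm
  calc ∑ i, u i * du i = ∑ i, -(h i - h (i - 1)) / Δx := by simp_rw [key]
    _ = -((∑ i, h i) - ∑ i, h (i - 1)) / Δx := by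
        rw [← Finset.sum_sub_distrib, ← Finset.sum_neg_distrib, ← Finset.sum_div]
    _ = 0 := by rw [hsum]; simp
end
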